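/- Iterated continuation: let C, λ, T, Φ > 0 with λT < 1, and define recursively Δ₀ = (λT−1)² − 4CΦ/λ, a₀ = λ((1−λT) − √Δ₀)/(2CΦ), and for r ≥ 1, Δ_r = (λT−1)² − 4C·a_{r−1}·Φ/λ, a_r = λ((1−λT) − √Δ_r)/(2CΦ). If a_{r−1} ≥ 1 and Δ_r ≥ 0 then a_r ≥ a_{r−1} ≥ 1; in particular the sequence (a_r) is well-defined and nondecreasing as long as all discriminants Δ_r remain nonnegative. -/
import Mathlib


/-- Iterated continuation: the sequence of norm-growth constants `a_r` is
nondecreasing as long as the discriminants stay nonnegative. -/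
theorem stmt19 (C lam T Φ : ℝ) (hC : 0 < C) (hlam : 0 < lam) (hT : 0 < T)
    (hΦ : 0 < Φ) (hlT : lam * T < 1)
    (aprev : ℝ) (haprev : 1 ≤ aprev)
    (Δr : ℝ) (hΔr : Δr = (lam * T - 1) ^ 2 - 4 * C * aprev * Φ / lam)
    (hΔr0 : 0 ≤ Δr)
    (ar : ℝ) (har : ar = lam * ((1 - lam * T) - Real.sqrt Δr) / (2 * C * Φ)) :
    1 ≤ aprev ∧ aprev ≤ ar := by
  refine ⟨haprev, ?_⟩
  set u : ℝ := C * Φ * aprev / lam with hu_def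
  have hu : 0 < u := by positivity
  have hΔu : Δr = (1 - lam * T) ^ 2 - 4 * u := by
    rw [hΔr, hu_def]; ring
  have hlt : 0 < 1 - lam * T := by linarith
  have h4u : 4 * u ≤ (1 - lam * T) ^ 2 := by
    rw [hΔu] at hΔr0; linarith
  have h4u' : 4 * u ≤ 1 - lam * T := by
    nlinarith [mul_pos (mul_pos hlam hT) hlt]
  have hR : 0 ≤ (1 - lam * T) - 2 * u := by linarith
  have hsq : Δr ≤ ((1 - lam * T) - 2 * u) ^ 2 := by
    rw [hΔu]
    nlinarith [mul_pos hu (mul_pos hlam hT)]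
  have hs : Real.sqrt Δr ≤ (1 - lam * T) - 2 * u := by
    calc Real.sqrt Δr ≤ Real.sqrt (((1 - lam * T) - 2 * u) ^ 2) :=
          Real.sqrt_le_sqrt hsq
      _ = (1 - lam * T) - 2 * u := Real.sqrt_sq hR
  rw [har, le_div_iff₀ (by positivity)]
  have hul : u * lam = C * Φ * aprev := by
    rw [hu_def, div_mul_cancel₀]
    exact ne_of_gt hlam
  nlinarith [mul_le_mul_of_nonneg_left hs (le_of_lt hlam)]
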